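/- (Abstract Hurewicz Theorem.) Let M : C ⇄ D : U be an adjunction (M left adjoint to U) of triangulated functors between t-categories, with M right-t-exact and U left-t-exact. Then for every E ∈ C_{≥0} there is a natural isomorphism π₀^D(M E) ≅ M^♥(π₀^C E) in the heart D^♥. -/

import Mathlib

/-!
For `E ∈ C_{≥0}` the canonical map `u : E → π₀E` becomes invertible after applying `τ_{≤0}`,
i.e. precomposition with `u` is bijective on maps into objects of `C_{≤0}`. Since `U` is
left-t-exact, the adjunction transports this to `M u` and objects of `D_{≤0}`, so
`τ_{≤0}(M u)`, and hence `π₀^D(M u) : π₀^D(M E) → π₀^D(M π₀E) = M^♥(π₀E)`, is an isomorphism.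
-/

open CategoryTheory Category Limits Pretriangulated Triangulated

namespace TPaper

variable (C : Type*) [Category C] [Preadditive C] [HasZeroObject C] [HasShift C ℤ]
  [∀ n : ℤ, (shiftFunctor C n).Additive] [Pretriangulated C]

/-- A t-category structure: a t-structure (in homological notation, so that
`LE n` is the predicate of being `≤ n`, i.e. in `C_{≤ n}`, and `GE n` that of
being `≥ n`) together with chosen truncation functors.  `truncLE n` is the
left adjoint of the inclusion `C_{≤ n} ↪ C` and `truncGE n` is the right
adjoint of the inclusion `C_{≥ n} ↪ C`; the adjunction properties are
expressed by the universal properties `truncLE_uni`, `truncGE_uni`. -/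
structure TCat where
  /-- the underlying t-structure -/
  t : TStructure C
  /-- truncation `E ↦ E_{≤ n}` -/
  truncLE : ℤ → C ⥤ C
  /-- truncation `E ↦ E_{≥ n}` -/
  truncGE : ℤ → C ⥤ C
  /-- the unit `E → E_{≤ n}` of the reflection onto `C_{≤ n}` -/
  truncLEπ (n : ℤ) : 𝟭 C ⟶ truncLE n
  /-- the counit `E_{≥ n} → E` of the coreflection onto `C_{≥ n}` -/
  truncGEι (n : ℤ) : truncGE n ⟶ 𝟭 C
  le_truncLE (n : ℤ) (X : C) : t.le n ((truncLE n).obj X)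
  ge_truncGE (n : ℤ) (X : C) : t.ge n ((truncGE n).obj X)
  /-- `truncLE n` is left adjoint to the inclusion of `C_{≤ n}` -/
  truncLE_uni {n : ℤ} {X Y : C} (hY : t.le n Y) (f : X ⟶ Y) :
    ∃! g : (truncLE n).obj X ⟶ Y, (truncLEπ n).app X ≫ g = f
  /-- `truncGE n` is right adjoint to the inclusion of `C_{≥ n}` -/
  truncGE_uni {n : ℤ} {X Y : C} (hX : t.ge n X) (f : X ⟶ Y) :
    ∃! g : X ⟶ (truncGE n).obj Y, g ≫ (truncGEι n).app Y = f
  /-- `(E_{≤ 0})_{≥ 0}` is again `≤ 0`, so that `π₀(E) = (E_{≤0})_{≥0}` lies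
  in the heart -/
  le_pi0 (X : C) : t.le 0 ((truncGE 0).obj ((truncLE 0).obj X))

variable {C}

namespace TCat

variable (tC : TCat C)

/-- The heart `C^♥ = C_{≤ 0} ∩ C_{≥ 0}` of a t-category. -/
abbrev Heart : Type _ := ObjectProperty.FullSubcategory (fun X => tC.t.le 0 X ∧ tC.t.ge 0 X)

/-- The inclusion of the heart. -/
abbrev heartι : tC.Heart ⥤ C := ObjectProperty.ι _

/-- The functor `π₀ : C → C^♥`, `E ↦ (E_{≤ 0})_{≥ 0}`. -/
def pi0 : C ⥤ tC.Heart :=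
  ObjectProperty.lift _ (tC.truncLE 0 ⋙ tC.truncGE 0)
    (fun X => ⟨tC.le_pi0 X, tC.ge_truncGE 0 _⟩)

end TCat

variable {D : Type*} [Category D] [Preadditive D] [HasZeroObject D] [HasShift D ℤ]
  [∀ n : ℤ, (shiftFunctor D n).Additive] [Pretriangulated D]

/-- A functor `F : C → D` between t-categories is right-t-exact if
`F(C_{≥ 0}) ⊆ D_{≥ 0}`. -/
def RightTExact (tC : TCat C) (tD : TCat D) (F : C ⥤ D) : Prop :=
  ∀ X : C, tC.t.ge 0 X → tD.t.ge 0 (F.obj X)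

/-- A functor `F : C → D` between t-categories is left-t-exact if
`F(C_{≤ 0}) ⊆ D_{≤ 0}`. -/
def LeftTExact (tC : TCat C) (tD : TCat D) (F : C ⥤ D) : Prop :=
  ∀ X : C, tC.t.le 0 X → tD.t.le 0 (F.obj X)

/-- The functor `F^♥ : C^♥ → D^♥`, `E ↦ π₀^D(F E)`, induced on hearts by a
functor `F : C → D` between t-categories. -/
def heartFunctor (tC : TCat C) (tD : TCat D) (F : C ⥤ D) : tC.Heart ⥤ tD.Heart :=
  tC.heartι ⋙ F ⋙ tD.pi0

lemma _root_.CategoryTheory.Adjunction.isLocal_map {A B : Type*} [Category A] [Category B]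
    {F : A ⥤ B} {G : B ⥤ A} (adj : F ⊣ G) {P : ObjectProperty A} {Q : ObjectProperty B}
    (hG : ∀ Z, Q Z → P (G.obj Z)) {X Y : A} {f : X ⟶ Y} (hf : P.isLocal f) :
    Q.isLocal (F.map f) := by
  intro Z hZ
  have hcomp : (fun g : F.obj Y ⟶ Z => F.map f ≫ g) =
      (adj.homEquiv X Z).symm ∘ (fun g : Y ⟶ G.obj Z => f ≫ g) ∘ adj.homEquiv Y Z := by
    funext g
    simp [Adjunction.homEquiv_naturality_left_symm]
  rw [hcomp]
  exact (adj.homEquiv X Z).symm.bijective.comp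
    ((hf _ (hG Z hZ)).comp (adj.homEquiv Y Z).bijective)

namespace TCat

variable (tC : TCat C)

lemma isLocal_truncLEπ (X : C) : (tC.t.le 0).isLocal ((tC.truncLEπ 0).app X) :=
  fun _ hZ => (Function.bijective_iff_existsUnique _).2 (tC.truncLE_uni hZ)

lemma truncLE_hom_ext {n : ℤ} {X Y : C} (hY : tC.t.le n Y) {g g' : (tC.truncLE n).obj X ⟶ Y}
    (h : (tC.truncLEπ n).app X ≫ g = (tC.truncLEπ n).app X ≫ g') : g = g' :=
  (tC.truncLE_uni hY _).unique h rfl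

lemma isIso_truncLE_map_of_isLocal {X Y : C} {f : X ⟶ Y} (hf : (tC.t.le 0).isLocal f) :
    IsIso ((tC.truncLE 0).map f) := by
  have hπf : (tC.t.le 0).isLocal ((tC.truncLEπ 0).app X ≫ (tC.truncLE 0).map f) := by
    rw [← (tC.truncLEπ 0).naturality f]
    exact (tC.t.le 0).isLocal.comp_mem _ _ hf (tC.isLocal_truncLEπ Y)
  rw [← ObjectProperty.isLocal_iff_isIso _ _ (tC.le_truncLE 0 X) (tC.le_truncLE 0 Y)]
  exact MorphismProperty.of_precomp _ _ _ (tC.isLocal_truncLEπ X) hπf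

lemma isIso_pi0_map_of_isLocal {X Y : C} {f : X ⟶ Y} (hf : (tC.t.le 0).isLocal f) :
    IsIso (tC.pi0.map f) := by
  have : IsIso ((tC.truncLE 0).map f) := tC.isIso_truncLE_map_of_isLocal hf
  have : IsIso (tC.heartι.map (tC.pi0.map f)) :=
    inferInstanceAs (IsIso ((tC.truncGE 0).map ((tC.truncLE 0).map f)))
  exact isIso_of_reflects_iso _ tC.heartι

lemma truncGE_hom_ext {n : ℤ} {X Y : C} (hX : tC.t.ge n X) {g g' : X ⟶ (tC.truncGE n).obj Y}
    (h : g ≫ (tC.truncGEι n).app Y = g' ≫ (tC.truncGEι n).app Y) : g = g' :=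
  (tC.truncGE_uni hX _).unique h rfl

noncomputable def toPi0 {X : C} (hX : tC.t.ge 0 X) :
    X ⟶ (tC.truncGE 0).obj ((tC.truncLE 0).obj X) :=
  (tC.truncGE_uni hX ((tC.truncLEπ 0).app X)).choose

lemma toPi0_truncGEι {X : C} (hX : tC.t.ge 0 X) :
    tC.toPi0 hX ≫ (tC.truncGEι 0).app ((tC.truncLE 0).obj X) = (tC.truncLEπ 0).app X :=
  (tC.truncGE_uni hX _).choose_spec.1

lemma toPi0_naturality {X Y : C} (hX : tC.t.ge 0 X) (hY : tC.t.ge 0 Y) (f : X ⟶ Y) :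
    f ≫ tC.toPi0 hY = tC.toPi0 hX ≫ (tC.truncGE 0).map ((tC.truncLE 0).map f) := by
  apply tC.truncGE_hom_ext hX
  have hι := (tC.truncGEι 0).naturality ((tC.truncLE 0).map f)
  rw [Functor.id_map] at hι
  rw [assoc, toPi0_truncGEι, assoc, hι, ← assoc, toPi0_truncGEι]
  exact (tC.truncLEπ 0).naturality f

lemma isIso_truncGEι_app_truncLE {X : C} (hX : tC.t.ge 0 X) :
    IsIso ((tC.truncGEι 0).app ((tC.truncLE 0).obj X)) := by
  -- `π₀X ∈ C_{≤0}`, so `toPi0` factors through `X → X_{≤0}`; the factor inverts `truncGEι`.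
  obtain ⟨s, hs, -⟩ := tC.truncLE_uni (tC.le_pi0 X) (tC.toPi0 hX)
  have hsι : s ≫ (tC.truncGEι 0).app _ = 𝟙 _ := by
    apply tC.truncLE_hom_ext (tC.le_truncLE 0 X)
    rw [← assoc, hs, comp_id]
    exact tC.toPi0_truncGEι hX
  exact ⟨s, tC.truncGE_hom_ext (tC.ge_truncGE 0 _) (by simp [hsι]), hsι⟩

lemma isLocal_toPi0 {X : C} (hX : tC.t.ge 0 X) : (tC.t.le 0).isLocal (tC.toPi0 hX) := by
  have := tC.isIso_truncGEι_app_truncLE hX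
  refine ((tC.t.le 0).isLocal.cancel_right_of_respectsIso _ ((tC.truncGEι 0).app _)).1 ?_
  rw [toPi0_truncGEι]
  exact tC.isLocal_truncLEπ X

noncomputable def toPi0NatTrans : (tC.t.ge 0).ι ⟶ (tC.t.ge 0).ι ⋙ tC.pi0 ⋙ tC.heartι where
  app E := tC.toPi0 E.property
  naturality _ _ f := tC.toPi0_naturality _ _ f.hom

end TCat

theorem abstract_hurewicz_general (tC : TCat C) (tD : TCat D)
    (M : C ⥤ D) (U : D ⥤ C) (adj : M ⊣ U)
    (hU : LeftTExact tD tC U) :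
    Nonempty ((ObjectProperty.ι (tC.t.ge 0) ⋙ M ⋙ tD.pi0) ≅
      (ObjectProperty.ι (tC.t.ge 0) ⋙ tC.pi0 ⋙ heartFunctor tC tD M)) := by
  let η := Functor.whiskerRight tC.toPi0NatTrans (M ⋙ tD.pi0)
  have (E : (tC.t.ge 0).FullSubcategory) : IsIso (η.app E) :=
    tD.isIso_pi0_map_of_isLocal (adj.isLocal_map hU (tC.isLocal_toPi0 E.property))
  have : IsIso η := NatIso.isIso_of_isIso_app η
  exact ⟨(asIso η :)⟩

/-- Abstract Hurewicz: for `E ∈ C_{≥ 0}` one has `π₀^D(M E) ≅ M^♥(π₀^C E)`,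
naturally in `E` (naturality being expressed by an isomorphism of functors on
the full subcategory `C_{≥ 0}` of `C`). -/
theorem abstract_hurewicz (tC : TCat C) (tD : TCat D)
    (M : C ⥤ D) (U : D ⥤ C) [M.CommShift ℤ] [M.IsTriangulated]
    [U.CommShift ℤ] [U.IsTriangulated] (adj : M ⊣ U)
    (hM : RightTExact tC tD M) (hU : LeftTExact tD tC U) :
    Nonempty ((ObjectProperty.ι (tC.t.ge 0) ⋙ M ⋙ tD.pi0) ≅
      (ObjectProperty.ι (tC.t.ge 0) ⋙ tC.pi0 ⋙ heartFunctor tC tD M)) :=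
  abstract_hurewicz_general tC tD M U adj hU

end TPaper
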